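/- Let A, B : ℝ³ → M₃(ℝ) be differentiable symmetric-matrix-valued fields. Then pointwise on ℝ³ one has div[A,B] = ⟨curl A, B⟩ − ⟨A, curl B⟩, where [A,B] denotes the vector field x ↦ [A(x),B(x)]. (This is the flat-space version of the generalized divergence-of-a-vector-product identity of the 1+3 formalism.) -/

import Mathlib

/-! By the product rule, div[A,B] = Σₐ ([∂ₐA, B]ₐ + [A, ∂ₐB]ₐ). Since [Mᵀ, Nᵀ] = −[N, M] and A, ∂ₐB
are symmetric, the second sum is −Σₐ [∂ₐB, A]ₐ. For symmetric Q, Σₐ [∂ₐA, Q]ₐ = ⟨curl A, Q⟩: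
cyclicity of ε rewrites the left side as Σ ε_{icd} ∂_c A_{dj} Q_{ij}, and the symmetry of Q folds
the two halves of the symmetrised curl onto this same sum. -/

open Matrix BigOperators
open scoped RealInnerProductSpace

noncomputable section

/-- Vectors in ℝ³. -/
abbrev V3 := Fin 3 → ℝ

/-- 3×3 real matrices. -/
abbrev M3 := Matrix (Fin 3) (Fin 3) ℝ

/-- The Levi-Civita symbol on three indices. -/
def eps (a b c : Fin 3) : ℝ :=
  if (a, b, c) = (0, 1, 2) ∨ (a, b, c) = (1, 2, 0) ∨ (a, b, c) = (2, 0, 1) then 1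
  else if (a, b, c) = (0, 2, 1) ∨ (a, b, c) = (2, 1, 0) ∨ (a, b, c) = (1, 0, 2) then -1
  else 0

/-- The Frobenius inner product ⟨A,B⟩ = Σ_{i,j} A_{ij} B_{ij}. -/
def frob (A B : M3) : ℝ := ∑ i, ∑ j, A i j * B i j

/-- The Euclidean inner product on ℝ³. -/
def dot3 (v w : V3) : ℝ := ∑ a, v a * w a

/-- The generalized vector product of two 3×3 matrices:
    [A,B]_a = Σ_{b,c} ε_{abc} (AB)_{bc}. -/
def mcross (A B : M3) : V3 := fun a => ∑ b, ∑ c, eps a b c * (A * B) b c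

/-- v ∧ B : (v∧B)_{ab} = ½ Σ_{c,d} (ε_{acd} v_c B_{db} + ε_{bcd} v_c B_{da}). -/
def vwedge (v : V3) (B : M3) : M3 := fun a b =>
  (1 / 2 : ℝ) * ∑ c, ∑ d, (eps a c d * v c * B d b + eps b c d * v c * B d a)

/-- The tensor product (a⊗ω)_{ij} = a_i ω_j. -/
def tens (a ω : V3) : M3 := fun i j => a i * ω j

/-- The trace-free symmetric part X^ = ½(X+Xᵀ) − (1/3)(Tr X)·I. -/
def hat (X : M3) : M3 := (1 / 2 : ℝ) • (X + Xᵀ) - ((1 / 3 : ℝ) * X.trace) • (1 : M3)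

/-- The partial derivative ∂_c f at x of a scalar field f : ℝ³ → ℝ. -/
def pd (c : Fin 3) (f : V3 → ℝ) (x : V3) : ℝ := fderiv ℝ f x (Pi.single c 1)

/-- The curl of a matrix field:
    (curl A)_{ab} = ½ Σ_{c,d} (ε_{acd} ∂_c A_{db} + ε_{bcd} ∂_c A_{da}). -/
def curlM (A : V3 → M3) (x : V3) : M3 := fun a b =>
  (1 / 2 : ℝ) * ∑ c, ∑ d,
    (eps a c d * pd c (fun y => A y d b) x + eps b c d * pd c (fun y => A y d a) x)

/-- The divergence of a vector field: div w = Σ_a ∂_a w_a. -/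
def divV (w : V3 → V3) (x : V3) : ℝ := ∑ a, pd a (fun y => w y a) x

/-- The divergence of a matrix field: (div A)_b = Σ_a ∂_a A_{ab}. -/
def divM (A : V3 → M3) (x : V3) : V3 := fun b => ∑ a, pd a (fun y => A y a b) x

/-- The Jacobian matrix field (Dw)_{ab} = ∂_a w_b. -/
def jac (w : V3 → V3) (x : V3) : M3 := fun a b => pd a (fun y => w y b) x

lemma eps_cyclic (a b c : Fin 3) : eps a b c = eps c a b := by
  fin_cases a <;> fin_cases b <;> fin_cases c <;> simp [eps, Fin.ext_iff]

lemma eps_swap_right (a b c : Fin 3) : eps a c b = -eps a b c := by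
  fin_cases a <;> fin_cases b <;> fin_cases c <;> simp [eps, Fin.ext_iff]

lemma mcross_transpose (M N : M3) : mcross Mᵀ Nᵀ = -mcross N M := by
  ext a
  simp only [mcross, ← Matrix.transpose_mul, Matrix.transpose_apply, Pi.neg_apply]
  rw [Finset.sum_comm, ← Finset.sum_neg_distrib]
  refine Finset.sum_congr rfl fun b _ => ?_
  rw [← Finset.sum_neg_distrib]
  refine Finset.sum_congr rfl fun c _ => ?_
  rw [eps_swap_right]
  ring

section Derivatives

variable {c : Fin 3} {x : V3}

lemma pd_sum {ι : Type*} (s : Finset ι) {f : ι → V3 → ℝ}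
    (hf : ∀ i ∈ s, DifferentiableAt ℝ (f i) x) :
    pd c (fun y => ∑ i ∈ s, f i y) x = ∑ i ∈ s, pd c (f i) x := by
  rw [pd, fderiv_fun_sum hf, _root_.sum_apply]
  rfl

lemma pd_const_mul (e : ℝ) {f : V3 → ℝ} (hf : DifferentiableAt ℝ f x) :
    pd c (fun y => e * f y) x = e * pd c f x := by
  rw [pd, fderiv_const_mul hf]
  rfl

lemma pd_mul {f g : V3 → ℝ} (hf : DifferentiableAt ℝ f x) (hg : DifferentiableAt ℝ g x) :
    pd c (fun y => f y * g y) x = pd c f x * g x + f x * pd c g x := by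
  rw [pd, fderiv_fun_mul hf hg]
  simp only [_root_.add_apply, _root_.smul_apply, smul_eq_mul]
  rw [pd, pd]
  ring

end Derivatives

def pdM (c : Fin 3) (A : V3 → M3) (x : V3) : M3 := Matrix.of fun i j => pd c (fun y => A y i j) x

def curlOfPartials (D : Fin 3 → M3) : M3 := Matrix.of fun a b =>
  (1 / 2 : ℝ) * ∑ c, ∑ d, (eps a c d * D c d b + eps b c d * D c d a)

lemma curlM_eq_curlOfPartials (A : V3 → M3) (x : V3) :
    curlM A x = curlOfPartials (fun c => pdM c A x) := rfl

lemma pdM_transpose (c : Fin 3) (A : V3 → M3) (x : V3) :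
    (pdM c A x)ᵀ = pdM c (fun y => (A y)ᵀ) x := rfl

lemma frob_comm (M N : M3) : frob M N = frob N M := by
  simp only [frob, mul_comm]

lemma frob_curlOfPartials_of_symm (D : Fin 3 → M3) {Q : M3} (hQ : Qᵀ = Q) :
    frob (curlOfPartials D) Q = ∑ i, ∑ j, ∑ c, ∑ d, eps i c d * D c d j * Q i j := by
  have hQ' : ∀ i j, Q j i = Q i j := fun i j => congrFun (congrFun hQ i) j
  have hswap : ∑ i, ∑ j, ∑ c, ∑ d, eps j c d * D c d i * Q i j
      = ∑ i, ∑ j, ∑ c, ∑ d, eps i c d * D c d j * Q i j := by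
    rw [Finset.sum_comm]
    refine Finset.sum_congr rfl fun i _ => Finset.sum_congr rfl fun j _ => ?_
    simp only [hQ' i j]
  calc frob (curlOfPartials D) Q
      = (1 / 2 : ℝ) * ((∑ i, ∑ j, ∑ c, ∑ d, eps i c d * D c d j * Q i j)
          + ∑ i, ∑ j, ∑ c, ∑ d, eps j c d * D c d i * Q i j) := by
        simp only [frob, curlOfPartials, Matrix.of_apply, Finset.mul_sum, Finset.sum_mul,
          ← Finset.sum_add_distrib, mul_add, add_mul, mul_assoc]
    _ = _ := by rw [hswap]; ring

lemma sum_sum_comm_pairs {α β M : Type*} [Fintype α] [Fintype β] [AddCommMonoid M]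
    (f : α → α → β → β → M) :
    ∑ a, ∑ b, ∑ c, ∑ d, f a b c d = ∑ c, ∑ d, ∑ a, ∑ b, f a b c d := by
  calc ∑ a, ∑ b, ∑ c, ∑ d, f a b c d = ∑ p : α × α, ∑ q : β × β, f p.1 p.2 q.1 q.2 := by
        simp only [Fintype.sum_prod_type]
    _ = ∑ q : β × β, ∑ p : α × α, f p.1 p.2 q.1 q.2 := Finset.sum_comm
    _ = ∑ c, ∑ d, ∑ a, ∑ b, f a b c d := by simp only [Fintype.sum_prod_type]

lemma sum_mcross_apply_eq_frob_curlOfPartials (D : Fin 3 → M3) {Q : M3} (hQ : Qᵀ = Q) :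
    ∑ a, mcross (D a) Q a = frob (curlOfPartials D) Q := by
  have hQ' : ∀ i j, Q j i = Q i j := fun i j => congrFun (congrFun hQ i) j
  rw [frob_curlOfPartials_of_symm D hQ, sum_sum_comm_pairs]
  simp only [mcross, Matrix.mul_apply, Finset.mul_sum]
  refine Finset.sum_congr rfl fun a _ => Finset.sum_congr rfl fun b _ =>
    Finset.sum_congr rfl fun c _ => Finset.sum_congr rfl fun k _ => ?_
  rw [eps_cyclic, hQ']
  ring

section ProductRule

variable {A B : V3 → M3} {x : V3}
  (hA : ∀ i j, DifferentiableAt ℝ (fun y => A y i j) x)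
  (hB : ∀ i j, DifferentiableAt ℝ (fun y => B y i j) x)
include hA hB

lemma differentiableAt_mul_apply (i j : Fin 3) :
    DifferentiableAt ℝ (fun y => (A y * B y) i j) x := by
  simp only [Matrix.mul_apply]
  exact DifferentiableAt.fun_sum fun k _ => (hA i k).fun_mul (hB k j)

lemma pdM_mul (c : Fin 3) :
    pdM c (fun y => A y * B y) x = pdM c A x * B x + A x * pdM c B x := by
  ext i j
  simp only [pdM, Matrix.of_apply, Matrix.add_apply, Matrix.mul_apply]
  rw [pd_sum _ fun k _ => (hA i k).fun_mul (hB k j), ← Finset.sum_add_distrib]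
  exact Finset.sum_congr rfl fun k _ => pd_mul (hA i k) (hB k j)

lemma pd_mcross_apply (c a : Fin 3) :
    pd c (fun y => mcross (A y) (B y) a) x
      = mcross (pdM c A x) (B x) a + mcross (A x) (pdM c B x) a := by
  have hAB := differentiableAt_mul_apply hA hB
  simp only [mcross]
  rw [pd_sum _ fun b _ => DifferentiableAt.fun_sum fun d _ => (hAB b d).const_mul _,
    ← Finset.sum_add_distrib]
  refine Finset.sum_congr rfl fun b _ => ?_
  rw [pd_sum _ fun d _ => (hAB b d).const_mul _, ← Finset.sum_add_distrib]
  refine Finset.sum_congr rfl fun d _ => ?_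
  rw [pd_const_mul _ (hAB b d), ← mul_add]
  exact congrArg _ (congrFun (congrFun (pdM_mul hA hB c) b) d)

end ProductRule

/-- div[A,B] = ⟨curl A, B⟩ − ⟨A, curl B⟩ for differentiable
    symmetric matrix fields A, B. -/
theorem stmt_2 (A B : V3 → M3)
    (hA : ∀ i j, Differentiable ℝ fun x => A x i j)
    (hB : ∀ i j, Differentiable ℝ fun x => B x i j)
    (hAsym : ∀ x, (A x)ᵀ = A x) (hBsym : ∀ x, (B x)ᵀ = B x) :
    ∀ x, divV (fun y => mcross (A y) (B y)) x
      = frob (curlM A x) (B x) - frob (A x) (curlM B x) := by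
  intro x
  have hpdB_symm (c : Fin 3) : (pdM c B x)ᵀ = pdM c B x := by
    rw [pdM_transpose]
    simp only [hBsym]
  calc divV (fun y => mcross (A y) (B y)) x
      = ∑ a, (mcross (pdM a A x) (B x) a + mcross (A x) (pdM a B x) a) :=
        Finset.sum_congr rfl fun a _ =>
          pd_mcross_apply (fun i j => (hA i j).differentiableAt)
            (fun i j => (hB i j).differentiableAt) a a
    _ = ∑ a, mcross (pdM a A x) (B x) a - ∑ a, mcross (pdM a B x) (A x) a := by
        rw [← Finset.sum_sub_distrib]
        refine Finset.sum_congr rfl fun a _ => ?_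
        rw [← hAsym x, ← hpdB_symm a, mcross_transpose, hAsym x, hpdB_symm a]
        simp only [Pi.neg_apply, sub_eq_add_neg]
    _ = frob (curlM A x) (B x) - frob (A x) (curlM B x) := by
        rw [sum_mcross_apply_eq_frob_curlOfPartials _ (hBsym x),
          sum_mcross_apply_eq_frob_curlOfPartials _ (hAsym x), frob_comm (A x),
          curlM_eq_curlOfPartials, curlM_eq_curlOfPartials]
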